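/- Let d > 0, L > 0, and let x₁, …, x_N be points of the closed ball of radius L in ℝ³ such that ‖x_j − x_k‖ ≥ 2d for all j ≠ k. Then Σ_{k=1}^N Σ_{j ≠ k} ‖x_k − x_j‖⁻⁴ ≤ 16 (L + d)³ d⁻⁷. -/

import Mathlib

/-!
The balls of radius `d` around `2d`-separated points are disjoint, so comparing volumes bounds
the number of points in a ball of radius `R` by `(R + d)³ / d³`, and the number of points at
distance in `[2di, 2d(i + 1)]` from a fixed point by `(2i + 3)³ - (2i - 1)³ ≤ 124 i²`. Each such
shell contributes at most `124 i² (2di)⁻⁴ = 31 / (4d⁴ i²)` to an inner sum, and `∑ i⁻² ≤ 2`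
bounds the inner sum by `31 / (2d⁴)`; there are at most `(L + d)³ / d³` inner sums.
-/

open Metric MeasureTheory Module Finset

section Packing

variable {E ι : Type*} [NormedAddCommGroup E] [NormedSpace ℝ E] [FiniteDimensional ℝ E]
  [Nontrivial E] {s : Finset ι} {y : ι → E} {c : E} {d : ℝ}

theorem card_mul_pow_add_pow_le_of_ball_subset_annulus {R₀ R₁ : ℝ} (hd : 0 < d)
    (hR₀ : 0 ≤ R₀) (hR : R₀ ≤ R₁)
    (hsep : (s : Set ι).Pairwise fun i j => 2 * d ≤ dist (y i) (y j))
    (hsub : ∀ i ∈ s, ball (y i) d ⊆ closedBall c R₁ \ ball c R₀) :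
    s.card * d ^ finrank ℝ E + R₀ ^ finrank ℝ E ≤ R₁ ^ finrank ℝ E := by
  borelize E
  set μ : Measure E := Measure.addHaar
  have hdisj : (s : Set ι).PairwiseDisjoint fun i => ball (y i) d := fun i hi j hj hij =>
    ball_disjoint_ball (by linarith [hsep hi hj hij])
  have hcore : Disjoint (ball c R₀) (⋃ i ∈ s, ball (y i) d) :=
    Set.disjoint_iUnion₂_right.2 fun i hi => (Set.subset_sdiff.1 (hsub i hi)).2.symm
  have hvol : μ (ball c R₀) + ∑ i ∈ s, μ (ball (y i) d) ≤ μ (closedBall c R₁) := by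
    rw [← measure_biUnion_finset hdisj fun i _ => measurableSet_ball,
      ← measure_union hcore (s.measurableSet_biUnion fun _ _ => measurableSet_ball)]
    exact measure_mono (Set.union_subset (ball_subset_closedBall.trans
      (closedBall_subset_closedBall hR)) (Set.iUnion₂_subset fun i hi =>
        (hsub i hi).trans Set.sdiff_subset))
  rw [Measure.addHaar_ball μ c hR₀, Measure.addHaar_closedBall μ c (hR₀.trans hR),
    sum_congr rfl fun i _ => Measure.addHaar_ball μ (y i) hd.le, sum_const, nsmul_eq_mul,
    ← mul_assoc, ← add_mul, ENNReal.mul_le_mul_iff_left (measure_ball_pos μ 0 one_pos).ne'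
      measure_ball_lt_top.ne, ← ENNReal.ofReal_natCast, ← ENNReal.ofReal_mul (by positivity),
    ← ENNReal.ofReal_add (by positivity) (by positivity),
    ENNReal.ofReal_le_ofReal_iff (pow_nonneg (hR₀.trans hR) _)] at hvol
  linarith

theorem card_mul_pow_le_of_dist_le {R : ℝ} (hd : 0 < d) (hR : 0 ≤ R)
    (hsep : (s : Set ι).Pairwise fun i j => 2 * d ≤ dist (y i) (y j))
    (hy : ∀ i ∈ s, dist c (y i) ≤ R) :
    s.card * d ^ finrank ℝ E ≤ (R + d) ^ finrank ℝ E := by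
  have h := card_mul_pow_add_pow_le_of_ball_subset_annulus (c := c) (R₁ := R + d) hd le_rfl
    (by linarith) hsep fun i hi z hz => ⟨mem_closedBall.2 <| by
      linarith [dist_triangle z (y i) c, dist_comm (y i) c, mem_ball.1 hz, hy i hi], by simp⟩
  rwa [zero_pow finrank_pos.ne', add_zero] at h

theorem card_mul_pow_add_pow_le_of_dist_mem_Icc {ρ₀ ρ₁ : ℝ} (hd : 0 < d)
    (hdρ : d ≤ ρ₀) (hρ : ρ₀ ≤ ρ₁)
    (hsep : (s : Set ι).Pairwise fun i j => 2 * d ≤ dist (y i) (y j))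
    (hy : ∀ i ∈ s, dist c (y i) ∈ Set.Icc ρ₀ ρ₁) :
    s.card * d ^ finrank ℝ E + (ρ₀ - d) ^ finrank ℝ E ≤ (ρ₁ + d) ^ finrank ℝ E :=
  card_mul_pow_add_pow_le_of_ball_subset_annulus (c := c) hd (by linarith) (by linarith) hsep
    fun i hi z hz => by
      have hz := mem_ball.1 hz
      have hyi := hy i hi
      refine ⟨mem_closedBall.2 ?_, fun hzc => ?_⟩
      · linarith [dist_triangle z (y i) c, dist_comm (y i) c, hyi.2]
      · linarith [dist_triangle c z (y i), dist_comm z c, mem_ball.1 hzc, hyi.1]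

end Packing

section ThreeDim

variable {E ι : Type*} [NormedAddCommGroup E] [NormedSpace ℝ E] [FiniteDimensional ℝ E]
  {s : Finset ι} {y : ι → E} {c : E} {d : ℝ}

theorem sum_inv_dist_pow_four_le_of_dist_mem_Icc (hE : finrank ℝ E = 3) (hd : 0 < d) {i : ℕ}
    (hi : 1 ≤ i) (hsep : (s : Set ι).Pairwise fun i j => 2 * d ≤ dist (y i) (y j))
    (hy : ∀ j ∈ s, dist c (y j) ∈ Set.Icc (2 * d * i) (2 * d * (i + 1))) :
    ∑ j ∈ s, (dist c (y j) ^ 4)⁻¹ ≤ 31 / (4 * d ^ 4) * ((i : ℝ) ^ 2)⁻¹ := by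
  have : Nontrivial E := nontrivial_of_finrank_pos (R := ℝ) (by omega)
  have hi' : (1 : ℝ) ≤ i := by exact_mod_cast hi
  have hcount := card_mul_pow_add_pow_le_of_dist_mem_Icc hd (by nlinarith) (by nlinarith) hsep hy
  rw [hE] at hcount
  have hshell : (2 * d * (i + 1) + d) ^ 3 - (2 * d * i - d) ^ 3
      = (48 * i ^ 2 + 48 * i + 28) * d ^ 3 := by
    ring
  have hcard : (s.card : ℝ) ≤ 124 * i ^ 2 := by
    have h : (s.card : ℝ) * d ^ 3 ≤ (48 * i ^ 2 + 48 * i + 28) * d ^ 3 := by linarith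
    have := le_of_mul_le_mul_of_pos_right h (by positivity)
    nlinarith
  calc ∑ j ∈ s, (dist c (y j) ^ 4)⁻¹ ≤ ∑ _j ∈ s, ((2 * d * i) ^ 4)⁻¹ :=
        sum_le_sum fun j hj => by gcongr; exact (hy j hj).1
    _ = s.card * ((2 * d * i) ^ 4)⁻¹ := by rw [sum_const, nsmul_eq_mul]
    _ ≤ 124 * i ^ 2 * ((2 * d * i) ^ 4)⁻¹ := by gcongr
    _ = 31 / (4 * d ^ 4) * ((i : ℝ) ^ 2)⁻¹ := by field_simp; ring

theorem sum_inv_dist_pow_four_le (hE : finrank ℝ E = 3) (hd : 0 < d)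
    (hsep : (s : Set ι).Pairwise fun i j => 2 * d ≤ dist (y i) (y j))
    (hy : ∀ j ∈ s, 2 * d ≤ dist c (y j)) :
    ∑ j ∈ s, (dist c (y j) ^ 4)⁻¹ ≤ 31 / (2 * d ^ 4) := by
  classical
  set shell : ι → ℕ := fun j => ⌊dist c (y j) / (2 * d)⌋₊
  have hshell_pos : ∀ j ∈ s, 1 ≤ shell j := fun j hj =>
    Nat.le_floor <| by rw [Nat.cast_one, le_div_iff₀ (by positivity), one_mul]; exact hy j hj
  have hshell_mem : ∀ j ∈ s, shell j ∈ Ioo 0 (s.sup shell + 1) := fun j hj =>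
    mem_Ioo.2 ⟨hshell_pos j hj, Nat.lt_succ_of_le (le_sup hj)⟩
  have hdist : ∀ i : ℕ, ∀ j ∈ {j ∈ s | shell j = i},
      dist c (y j) ∈ Set.Icc (2 * d * i) (2 * d * (i + 1)) := by
    rintro i j hj
    obtain ⟨-, rfl⟩ := mem_filter.1 hj
    have hq : 0 ≤ dist c (y j) / (2 * d) := by positivity
    constructor
    · rw [← le_div_iff₀' (by positivity)]; exact Nat.floor_le hq
    · rw [← div_le_iff₀' (by positivity)]; exact (Nat.lt_floor_add_one _).le
  calc ∑ j ∈ s, (dist c (y j) ^ 4)⁻¹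
      = ∑ i ∈ Ioo 0 (s.sup shell + 1), ∑ j ∈ s with shell j = i, (dist c (y j) ^ 4)⁻¹ :=
        (sum_fiberwise_of_maps_to hshell_mem _).symm
    _ ≤ ∑ i ∈ Ioo 0 (s.sup shell + 1), 31 / (4 * d ^ 4) * ((i : ℝ) ^ 2)⁻¹ :=
        sum_le_sum fun i hi => sum_inv_dist_pow_four_le_of_dist_mem_Icc hE hd (mem_Ioo.1 hi).1
          (hsep.mono fun j hj => (mem_filter.1 hj).1) (hdist i)
    _ ≤ 31 / (4 * d ^ 4) * 2 := by
        rw [← mul_sum]; gcongr; simpa using sum_Ioo_inv_sq_le (α := ℝ) 0 _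
    _ = 31 / (2 * d ^ 4) := by field_simp; ring

end ThreeDim

theorem double_inverse_fourth_power_sum (d L : ℝ) (hd : 0 < d) (hL : 0 < L) (N : ℕ)
    (x : Fin N → EuclideanSpace ℝ (Fin 3))
    (hx : ∀ j, ‖x j‖ ≤ L)
    (hsep : ∀ j k, j ≠ k → 2 * d ≤ ‖x j - x k‖) :
    ∑ k, ∑ j ∈ Finset.univ.erase k, (‖x k - x j‖ ^ 4)⁻¹ ≤ 16 * (L + d) ^ 3 / d ^ 7 := by
  have hE : finrank ℝ (EuclideanSpace ℝ (Fin 3)) = 3 := finrank_euclideanSpace_fin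
  have hsep' : ∀ s : Finset (Fin N),
      (s : Set (Fin N)).Pairwise fun j k => 2 * d ≤ dist (x j) (x k) :=
    fun s j _ k _ hjk => (dist_eq_norm (x j) (x k)).ge.trans' (hsep j k hjk)
  have hcount : (N : ℝ) * d ^ 3 ≤ (L + d) ^ 3 := by
    simpa [hE] using card_mul_pow_le_of_dist_le (s := univ) (c := 0) hd hL.le (hsep' univ)
      fun j _ => by simpa [dist_zero_left] using hx j
  have hinner : ∀ k, ∑ j ∈ univ.erase k, (‖x k - x j‖ ^ 4)⁻¹ ≤ 31 / (2 * d ^ 4) := fun k => by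
    simpa only [dist_eq_norm] using sum_inv_dist_pow_four_le hE hd (hsep' _) fun j hj => by
      rw [dist_comm, dist_eq_norm]; exact hsep j k (ne_of_mem_erase hj)
  calc ∑ k, ∑ j ∈ univ.erase k, (‖x k - x j‖ ^ 4)⁻¹
      ≤ ∑ _k : Fin N, 31 / (2 * d ^ 4) := sum_le_sum fun k _ => hinner k
    _ = 31 / 2 * (N * d ^ 3) / d ^ 7 := by
        rw [sum_const, card_univ, Fintype.card_fin, nsmul_eq_mul]; field_simp
    _ ≤ 16 * (L + d) ^ 3 / d ^ 7 := by gcongr; nlinarith [pow_pos (add_pos hL hd) 3]
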